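/- Let v_1,…,v_s be i.i.d. random feature vectors and ψ a feature map satisfying Assumption 1 with constant b. For fixed points x_1,…,x_n with kernel matrix K and any y ∈ ℝⁿ, λ > 0, with K̃ = ΨΨᵀ the approximate kernel matrix, it holds that E_{V_s}[ ‖(K̃ − K)(K + nλ I_n)^{-1} y‖₂² ] ≤ (nb/s)·‖K^{1/2}(K + nλ I_n)^{-1} y‖₂². -/

import Mathlib

open MeasureTheory Matrix

noncomputable section

/-- Kernel matrix of the fixed points. -/
noncomputable def kerMat {d n : ℕ} (κ : (Fin d → ℝ) → (Fin d → ℝ) → ℝ)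
    (X : Fin n → (Fin d → ℝ)) : Matrix (Fin n) (Fin n) ℝ :=
  Matrix.of fun i j => κ (X i) (X j)

/-- Random feature matrix Ψ ∈ ℝ^{n×s}. -/
noncomputable def featMat {d n s : ℕ} {V : Type*} (ψ : (Fin d → ℝ) → V → ℝ)
    (X : Fin n → (Fin d → ℝ)) (vs : Fin s → V) : Matrix (Fin n) (Fin s) ℝ :=
  Matrix.of fun i l => (Real.sqrt s)⁻¹ * ψ (X i) (vs l)

/-! Row `i` of `(K̃ - K) z` is the deviation of the empirical mean `s⁻¹ ∑ₗ Fᵢ(vₗ)` from its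
expectation, where `Fᵢ(v) = ψ(xᵢ; v) ⟪φ(v), z⟫` and `φ(v) = (ψ(xⱼ; v))ⱼ`; hence its second moment
is `Var Fᵢ / s ≤ 𝔼[Fᵢ²] / s`. Summing over `i` and using `∑ᵢ ψ(xᵢ; v)² ≤ n b` bounds the total by
`(n b / s) 𝔼⟪φ(v), z⟫² = (n b / s) zᵀ K z`, for every `z`, in particular `z = (K + nλ I)⁻¹ y`. -/

open ProbabilityTheory
open scoped ENNReal

lemma memLp_top_of_ae_sq_le {V : Type*} [MeasurableSpace V] {p : Measure V} {f : V → ℝ} {b : ℝ}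
    (hf : AEStronglyMeasurable f p) (hb : ∀ᵐ v ∂p, f v ^ 2 ≤ b) : MemLp f ∞ p :=
  memLp_top_of_bound hf √b <| hb.mono fun v hv ↦ by
    rw [Real.norm_eq_abs, ← Real.sqrt_sq_eq_abs]
    exact Real.sqrt_le_sqrt hv

section SampleMean

variable {ι V : Type*} [Fintype ι] [MeasurableSpace V] {p : Measure V} [IsProbabilityMeasure p]
  {f : V → ℝ}

lemma memLp_sum_comp_eval_pi {q : ℝ≥0∞} (hf : MemLp f q p) :
    MemLp (fun vs : ι → V ↦ ∑ l, f (vs l)) q (Measure.pi fun _ ↦ p) :=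
  memLp_finsetSum _ fun l _ ↦
    hf.comp_measurePreserving (measurePreserving_eval (fun _ ↦ p) l)

lemma variance_sum_comp_eval_pi (hf : MemLp f 2 p) :
    Var[fun vs : ι → V ↦ ∑ l, f (vs l); Measure.pi fun _ ↦ p] = Fintype.card ι * Var[f; p] := by
  have := variance_sum_pi (μ := fun _ : ι ↦ p) fun _ ↦ hf
  simp only [Finset.sum_const, Finset.card_univ, nsmul_eq_mul] at this
  rw [← this]
  congr 1
  ext vs
  simp

lemma integral_sampleMean_sub_sq [Nonempty ι] (hf : MemLp f 2 p) :
    ∫ vs : ι → V, ((Fintype.card ι : ℝ)⁻¹ * ∑ l, f (vs l) - ∫ v, f v ∂p) ^ 2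
        ∂(Measure.pi fun _ ↦ p) = Var[f; p] / Fintype.card ι := by
  have hc : (Fintype.card ι : ℝ) ≠ 0 := Nat.cast_ne_zero.2 Fintype.card_ne_zero
  have hmean : ∫ vs : ι → V, (Fintype.card ι : ℝ)⁻¹ * ∑ l, f (vs l) ∂(Measure.pi fun _ ↦ p)
      = ∫ v, f v ∂p := by
    rw [integral_const_mul, integral_finsetSum _ fun l _ ↦
        integrable_comp_eval (hf.integrable one_le_two)]
    simp only [integral_comp_eval (μ := fun _ ↦ p) hf.aestronglyMeasurable, Finset.sum_const,
      Finset.card_univ, nsmul_eq_mul]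
    field_simp
  rw [← hmean, ← variance_eq_integral
    ((memLp_sum_comp_eval_pi hf).aestronglyMeasurable.aemeasurable.const_mul _),
    variance_const_mul, variance_sum_comp_eval_pi hf]
  field_simp

end SampleMean

def featVec {d n : ℕ} {V : Type*} (ψ : (Fin d → ℝ) → V → ℝ) (X : Fin n → (Fin d → ℝ)) (v : V) :
    Fin n → ℝ :=
  fun i ↦ ψ (X i) v

section RandomFeatures

variable {d n s : ℕ} {V : Type*} {ψ : (Fin d → ℝ) → V → ℝ} {κ : (Fin d → ℝ) → (Fin d → ℝ) → ℝ}
  (X : Fin n → (Fin d → ℝ)) (z : Fin n → ℝ)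

lemma featMat_mul_transpose_mulVec_apply (vs : Fin s → V) (i : Fin n) :
    ((featMat ψ X vs * (featMat ψ X vs)ᵀ) *ᵥ z) i
      = (s : ℝ)⁻¹ * ∑ l, ψ (X i) (vs l) * (featVec ψ X (vs l) ⬝ᵥ z) := by
  have hs : (Real.sqrt s)⁻¹ * (Real.sqrt s)⁻¹ = (s : ℝ)⁻¹ := by
    rw [← mul_inv, Real.mul_self_sqrt (Nat.cast_nonneg s)]
  simp only [mulVec, dotProduct, mul_apply, transpose_apply, featMat, featVec, of_apply,
    Finset.mul_sum, Finset.sum_mul]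
  rw [Finset.sum_comm]
  refine Finset.sum_congr rfl fun l _ ↦ Finset.sum_congr rfl fun j _ ↦ ?_
  rw [← hs]
  ring

variable [MeasurableSpace V] {p : Measure V}

lemma memLp_top_featVec_dotProduct (hψ : ∀ x, MemLp (ψ x) ∞ p) :
    MemLp (fun v ↦ featVec ψ X v ⬝ᵥ z) ∞ p :=
  memLp_finsetSum _ fun j _ ↦ (hψ (X j)).mul_const (z j)

lemma memLp_top_mul_featVec_dotProduct (hψ : ∀ x, MemLp (ψ x) ∞ p) (x : Fin d → ℝ) :
    MemLp (fun v ↦ ψ x v * (featVec ψ X v ⬝ᵥ z)) ∞ p :=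
  (memLp_top_featVec_dotProduct X z hψ).mul' (hψ x)

section FiniteMeasure

variable [IsFiniteMeasure p]

lemma integral_mul_featVec_dotProduct (hψ : ∀ x, MemLp (ψ x) ∞ p)
    (hunbias : ∀ x x', ∫ v, ψ x v * ψ x' v ∂p = κ x x') (i : Fin n) :
    ∫ v, ψ (X i) v * (featVec ψ X v ⬝ᵥ z) ∂p = (kerMat κ X *ᵥ z) i := by
  have hint : ∀ j, Integrable (fun v ↦ ψ (X i) v * ψ (X j) v * z j) p := fun j ↦
    (((hψ (X j)).mul' (hψ (X i))).integrable le_top).mul_const _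
  simp only [dotProduct, featVec, Finset.mul_sum, ← mul_assoc]
  rw [integral_finsetSum _ fun j _ ↦ hint j]
  simp [integral_mul_const, hunbias, mulVec, dotProduct, kerMat]

lemma integral_featVec_dotProduct_sq (hψ : ∀ x, MemLp (ψ x) ∞ p)
    (hunbias : ∀ x x', ∫ v, ψ x v * ψ x' v ∂p = κ x x') :
    ∫ v, (featVec ψ X v ⬝ᵥ z) ^ 2 ∂p = z ⬝ᵥ (kerMat κ X *ᵥ z) := by
  have hsq : ∀ v, (featVec ψ X v ⬝ᵥ z) ^ 2 = ∑ i, z i * (ψ (X i) v * (featVec ψ X v ⬝ᵥ z)) :=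
    fun v ↦ by
      rw [sq]
      conv_lhs => enter [1]; rw [dotProduct_comm]
      simp only [dotProduct, featVec, Finset.sum_mul, mul_assoc]
  simp_rw [hsq]
  rw [integral_finsetSum _ fun i _ ↦
    ((memLp_top_mul_featVec_dotProduct X z hψ (X i)).integrable le_top).const_mul _]
  simp only [integral_const_mul, integral_mul_featVec_dotProduct X z hψ hunbias]
  rfl

lemma featMat_mul_transpose_sub_kerMat_mulVec_apply (hψ : ∀ x, MemLp (ψ x) ∞ p)
    (hunbias : ∀ x x', ∫ v, ψ x v * ψ x' v ∂p = κ x x')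
    (vs : Fin s → V) (i : Fin n) :
    ((featMat ψ X vs * (featMat ψ X vs)ᵀ - kerMat κ X) *ᵥ z) i
      = (s : ℝ)⁻¹ * ∑ l, ψ (X i) (vs l) * (featVec ψ X (vs l) ⬝ᵥ z)
        - ∫ v, ψ (X i) v * (featVec ψ X v ⬝ᵥ z) ∂p := by
  rw [sub_mulVec, Pi.sub_apply, featMat_mul_transpose_mulVec_apply,
    integral_mul_featVec_dotProduct X z hψ hunbias]

end FiniteMeasure

variable [IsProbabilityMeasure p]

lemma integral_featMat_error_sq_eq_sum_variance (hs : 0 < s) (hψ : ∀ x, MemLp (ψ x) ∞ p)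
    (hunbias : ∀ x x', ∫ v, ψ x v * ψ x' v ∂p = κ x x') :
    ∫ vs : Fin s → V, ((featMat ψ X vs * (featMat ψ X vs)ᵀ - kerMat κ X) *ᵥ z) ⬝ᵥ
        ((featMat ψ X vs * (featMat ψ X vs)ᵀ - kerMat κ X) *ᵥ z) ∂(Measure.pi fun _ ↦ p)
      = ∑ i, Var[fun v ↦ ψ (X i) v * (featVec ψ X v ⬝ᵥ z); p] / s := by
  have : Nonempty (Fin s) := ⟨⟨0, hs⟩⟩
  have hF : ∀ i, MemLp (fun v ↦ ψ (X i) v * (featVec ψ X v ⬝ᵥ z)) 2 p := fun i ↦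
    (memLp_top_mul_featVec_dotProduct X z hψ (X i)).mono_exponent le_top
  have hdot : ∀ w : Fin n → ℝ, w ⬝ᵥ w = ∑ i, w i ^ 2 := fun w ↦ by simp only [dotProduct, sq]
  simp only [hdot, featMat_mul_transpose_sub_kerMat_mulVec_apply X z hψ hunbias]
  refine (integral_finsetSum _ fun i _ ↦ ?_).trans (Finset.sum_congr rfl fun i _ ↦ ?_)
  · exact (((memLp_sum_comp_eval_pi (hF i)).const_mul _).sub (memLp_const _)).integrable_sq
  · simpa using integral_sampleMean_sub_sq (ι := Fin s) (hF i)

lemma integral_featMat_error_sq_le (hs : 0 < s) {b : ℝ}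
    (hmeas : ∀ x, AEStronglyMeasurable (ψ x) p)
    (hunbias : ∀ x x', ∫ v, ψ x v * ψ x' v ∂p = κ x x') (hbound : ∀ᵐ v ∂p, ∀ x, ψ x v ^ 2 ≤ b) :
    ∫ vs : Fin s → V, ((featMat ψ X vs * (featMat ψ X vs)ᵀ - kerMat κ X) *ᵥ z) ⬝ᵥ
        ((featMat ψ X vs * (featMat ψ X vs)ᵀ - kerMat κ X) *ᵥ z) ∂(Measure.pi fun _ ↦ p)
      ≤ n * b / s * (z ⬝ᵥ (kerMat κ X *ᵥ z)) := by
  have hψ : ∀ x, MemLp (ψ x) ∞ p := fun x ↦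
    memLp_top_of_ae_sq_le (hmeas x) (hbound.mono fun v hv ↦ hv x)
  have hF : ∀ i, MemLp (fun v ↦ ψ (X i) v * (featVec ψ X v ⬝ᵥ z)) 2 p := fun i ↦
    (memLp_top_mul_featVec_dotProduct X z hψ (X i)).mono_exponent le_top
  have hg : MemLp (fun v ↦ featVec ψ X v ⬝ᵥ z) 2 p :=
    (memLp_top_featVec_dotProduct X z hψ).mono_exponent le_top
  have hpointwise : ∀ᵐ v ∂p, ∑ i, (ψ (X i) v * (featVec ψ X v ⬝ᵥ z)) ^ 2
      ≤ n * b * (featVec ψ X v ⬝ᵥ z) ^ 2 := hbound.mono fun v hv ↦ by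
    simp only [mul_pow, ← Finset.sum_mul]
    gcongr
    simpa using Finset.sum_le_sum fun i (_ : i ∈ Finset.univ) ↦ hv (X i)
  calc _ = ∑ i, Var[fun v ↦ ψ (X i) v * (featVec ψ X v ⬝ᵥ z); p] / s :=
        integral_featMat_error_sq_eq_sum_variance X z hs hψ hunbias
    _ ≤ ∑ i, (∫ v, (ψ (X i) v * (featVec ψ X v ⬝ᵥ z)) ^ 2 ∂p) / s := by
        gcongr with i
        simpa using variance_le_expectation_sq (hF i).aestronglyMeasurable
    _ = (∫ v, ∑ i, (ψ (X i) v * (featVec ψ X v ⬝ᵥ z)) ^ 2 ∂p) / s := by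
        rw [integral_finsetSum _ fun i _ ↦ (hF i).integrable_sq, Finset.sum_div]
    _ ≤ (∫ v, n * b * (featVec ψ X v ⬝ᵥ z) ^ 2 ∂p) / s := by
        gcongr ?_ / _
        exact integral_mono_ae (integrable_finsetSum _ fun i _ ↦ (hF i).integrable_sq)
          (hg.integrable_sq.const_mul _) hpointwise
    _ = n * b / s * (z ⬝ᵥ (kerMat κ X *ᵥ z)) := by
        rw [integral_const_mul, integral_featVec_dotProduct_sq X z hψ hunbias]
        ring

end RandomFeatures

theorem expected_ktilde_error_bound_general
    {d n s : ℕ} (hs : 0 < s) {V : Type*} [MeasurableSpace V]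
    (p : Measure V) [IsProbabilityMeasure p]
    (ψ : (Fin d → ℝ) → V → ℝ) (hm : ∀ x, Measurable (ψ x))
    (κ : (Fin d → ℝ) → (Fin d → ℝ) → ℝ)
    (b : ℝ)
    (hunbias : ∀ x x', ∫ v, ψ x v * ψ x' v ∂p = κ x x')
    (hbound : ∀ᵐ v ∂p, ∀ x, (ψ x v) ^ 2 ≤ b)
    (X : Fin n → (Fin d → ℝ)) (y : Fin n → ℝ) (lam : ℝ) :
    (∫ vs : Fin s → V,
        (((featMat ψ X vs * (featMat ψ X vs)ᵀ - kerMat κ X) *ᵥ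
            ((kerMat κ X + ((n : ℝ) * lam) • (1 : Matrix (Fin n) (Fin n) ℝ))⁻¹ *ᵥ y)) ⬝ᵥ
          ((featMat ψ X vs * (featMat ψ X vs)ᵀ - kerMat κ X) *ᵥ
            ((kerMat κ X + ((n : ℝ) * lam) • (1 : Matrix (Fin n) (Fin n) ℝ))⁻¹ *ᵥ y)))
        ∂(Measure.pi fun _ : Fin s => p)) ≤
      (n : ℝ) * b / s *
        ((((kerMat κ X + ((n : ℝ) * lam) • (1 : Matrix (Fin n) (Fin n) ℝ))⁻¹ *ᵥ y) ⬝ᵥ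
          (kerMat κ X *ᵥ
            ((kerMat κ X + ((n : ℝ) * lam) • (1 : Matrix (Fin n) (Fin n) ℝ))⁻¹ *ᵥ y)))) :=
  integral_featMat_error_sq_le X _ hs (fun x ↦ (hm x).aestronglyMeasurable) hunbias hbound

/-- E_{V_s}[‖(K̃ − K)(K + nλI)⁻¹y‖₂²] ≤ (nb/s)·‖K^{1/2}(K + nλI)⁻¹y‖₂²,
with K̃ = ΨΨᵀ, where ‖K^{1/2}z‖₂² is written as zᵀKz (K is symmetric PSD). -/
theorem expected_ktilde_error_bound
    {d n s : ℕ} (hs : 0 < s) {V : Type*} [MeasurableSpace V]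
    (p : Measure V) [IsProbabilityMeasure p]
    (ψ : (Fin d → ℝ) → V → ℝ) (hm : ∀ x, Measurable (ψ x))
    (κ : (Fin d → ℝ) → (Fin d → ℝ) → ℝ)
    (b : ℝ) (hb : 0 < b)
    (hunbias : ∀ x x', ∫ v, ψ x v * ψ x' v ∂p = κ x x')
    (hbound : ∀ᵐ v ∂p, ∀ x, (ψ x v) ^ 2 ≤ b)
    (X : Fin n → (Fin d → ℝ)) (y : Fin n → ℝ) (lam : ℝ) (hlam : 0 < lam) :
    (∫ vs : Fin s → V,
        (((featMat ψ X vs * (featMat ψ X vs)ᵀ - kerMat κ X) *ᵥ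
            ((kerMat κ X + ((n : ℝ) * lam) • (1 : Matrix (Fin n) (Fin n) ℝ))⁻¹ *ᵥ y)) ⬝ᵥ
          ((featMat ψ X vs * (featMat ψ X vs)ᵀ - kerMat κ X) *ᵥ
            ((kerMat κ X + ((n : ℝ) * lam) • (1 : Matrix (Fin n) (Fin n) ℝ))⁻¹ *ᵥ y)))
        ∂(Measure.pi fun _ : Fin s => p)) ≤
      (n : ℝ) * b / s *
        ((((kerMat κ X + ((n : ℝ) * lam) • (1 : Matrix (Fin n) (Fin n) ℝ))⁻¹ *ᵥ y) ⬝ᵥ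
          (kerMat κ X *ᵥ
            ((kerMat κ X + ((n : ℝ) * lam) • (1 : Matrix (Fin n) (Fin n) ℝ))⁻¹ *ᵥ y)))) :=
  expected_ktilde_error_bound_general hs p ψ hm κ b hunbias hbound X y lam
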